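/- arXiv:2210.12793 — 2 statements merged into one kernel-verified Lean document; each statement's English description precedes it below -/
import Mathlib

section
/- Let G be a group and ḡ ∈ G^n with πḡ = 1. For any h in the subgroup ⟨ḡ⟩ generated by the entries of ḡ, the tuples ḡ and ḡ^h are braid-equivalent. -/
/-- One Hurwitz braid move: replace adjacent entries `a, b` by `a*b*a⁻¹, a`. -/
inductive BraidMove (G : Type*) [Group G] : List G → List G → Prop
  | mk (l₁ l₂ : List G) (a b : G) :
      BraidMove G (l₁ ++ a :: b :: l₂) (l₁ ++ (a * b * a⁻¹) :: a :: l₂)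

/-- Braid equivalence of tuples: the equivalence relation generated by Hurwitz moves. -/
def BraidEquiv (G : Type*) [Group G] : List G → List G → Prop :=
  Relation.EqvGen (BraidMove G)

/-- Componentwise conjugation of a tuple: `ḡ^h = (h g₁ h⁻¹, …, h gₙ h⁻¹)`. -/
def conjList {G : Type*} [Group G] (h : G) (l : List G) : List G :=
  l.map fun x => h * x * h⁻¹

section Aux

variable {G : Type*} [Group G]

lemma braidEquiv_refl (l : List G) : BraidEquiv G l l := Relation.EqvGen.refl l

lemma braidEquiv_symm {l l' : List G} (h : BraidEquiv G l l') : BraidEquiv G l' l :=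
  Relation.EqvGen.symm _ _ h

lemma braidEquiv_trans {l₁ l₂ l₃ : List G} (h : BraidEquiv G l₁ l₂)
    (h' : BraidEquiv G l₂ l₃) : BraidEquiv G l₁ l₃ :=
  Relation.EqvGen.trans _ _ _ h h'

lemma conjList_append (h : G) (l₁ l₂ : List G) :
    conjList h (l₁ ++ l₂) = conjList h l₁ ++ conjList h l₂ := by
  simp [conjList]

lemma conjList_cons (h a : G) (l : List G) :
    conjList h (a :: l) = (h * a * h⁻¹) :: conjList h l := rfl

lemma conjList_one (l : List G) : conjList (1 : G) l = l := by
  simp [conjList]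

lemma conjList_conjList (a b : G) (l : List G) :
    conjList a (conjList b l) = conjList (a * b) l := by
  simp only [conjList, List.map_map]
  apply List.map_congr_left
  intro x _
  simp [Function.comp, mul_assoc]

lemma conjList_prod (h : G) (l : List G) : (conjList h l).prod = h * l.prod * h⁻¹ := by
  induction l with
  | nil => simp [conjList]
  | cons a t ih => simp [conjList_cons, ih, mul_assoc]

lemma braidMove_conj {l l' : List G} (h : G) (hm : BraidMove G l l') :
    BraidMove G (conjList h l) (conjList h l') := by
  rcases hm with ⟨l₁, l₂, a, b⟩
  have key : h * (a * b * a⁻¹) * h⁻¹ =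
      (h * a * h⁻¹) * (h * b * h⁻¹) * (h * a * h⁻¹)⁻¹ := by group
  rw [conjList_append, conjList_append, conjList_cons, conjList_cons, conjList_cons,
    conjList_cons, key]
  exact BraidMove.mk _ _ _ _

lemma braidEquiv_conj_map {l l' : List G} (h : G) (he : BraidEquiv G l l') :
    BraidEquiv G (conjList h l) (conjList h l') := by
  induction he with
  | rel x y hxy => exact Relation.EqvGen.rel _ _ (braidMove_conj h hxy)
  | refl x => exact Relation.EqvGen.refl _
  | symm x y _ ih => exact Relation.EqvGen.symm _ _ ih
  | trans x y z _ _ ih₁ ih₂ => exact Relation.EqvGen.trans _ _ _ ih₁ ih₂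

lemma braidMove_prod {l l' : List G} (hm : BraidMove G l l') : l.prod = l'.prod := by
  rcases hm with ⟨l₁, l₂, a, b⟩
  simp [List.prod_append, mul_assoc]

lemma braidEquiv_prod {l l' : List G} (he : BraidEquiv G l l') : l.prod = l'.prod := by
  induction he with
  | rel x y hxy => exact braidMove_prod hxy
  | refl x => rfl
  | symm x y _ ih => exact ih.symm
  | trans x y z _ _ ih₁ ih₂ => exact ih₁.trans ih₂

/-- Pushing an element to the back, conjugating the tail. -/
lemma braidEquiv_push (t : List G) : ∀ (p : List G) (a : G),
    BraidEquiv G (p ++ a :: t) (p ++ conjList a t ++ [a]) := by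
  induction t with
  | nil => intro p a; simp [conjList]; exact braidEquiv_refl _
  | cons b t ih =>
    intro p a
    have step : BraidMove G (p ++ a :: b :: t) (p ++ (a * b * a⁻¹) :: a :: t) :=
      BraidMove.mk _ _ _ _
    have h1 : BraidEquiv G (p ++ a :: b :: t) (p ++ (a * b * a⁻¹) :: a :: t) :=
      Relation.EqvGen.rel _ _ step
    have h2 := ih (p ++ [a * b * a⁻¹]) a
    have e1 : p ++ [a * b * a⁻¹] ++ a :: t = p ++ (a * b * a⁻¹) :: a :: t := by simp
    have e2 : p ++ [a * b * a⁻¹] ++ conjList a t ++ [a]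
        = p ++ conjList a (b :: t) ++ [a] := by
      simp [conjList_cons]
    rw [e1, e2] at h2
    exact braidEquiv_trans h1 h2

/-- Pushing an element to the back unchanged-tail version: the moved element
gets conjugated by the tail product. -/
lemma braidEquiv_push' (t : List G) : ∀ (p : List G) (a : G),
    BraidEquiv G (p ++ a :: t) (p ++ t ++ [t.prod⁻¹ * a * t.prod]) := by
  induction t with
  | nil => intro p a; simp; exact braidEquiv_refl _
  | cons b t ih =>
    intro p a
    have key : b * (b⁻¹ * a * b) * b⁻¹ = a := by group
    have step : BraidMove G (p ++ b :: (b⁻¹ * a * b) :: t)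
        (p ++ (b * (b⁻¹ * a * b) * b⁻¹) :: b :: t) := BraidMove.mk _ _ _ _
    rw [key] at step
    have h1 : BraidEquiv G (p ++ a :: b :: t) (p ++ b :: (b⁻¹ * a * b) :: t) :=
      Relation.EqvGen.symm _ _ (Relation.EqvGen.rel _ _ step)
    have h2 := ih (p ++ [b]) (b⁻¹ * a * b)
    have e1 : p ++ [b] ++ (b⁻¹ * a * b) :: t = p ++ b :: (b⁻¹ * a * b) :: t := by simp
    have e2 : p ++ [b] ++ t ++ [t.prod⁻¹ * (b⁻¹ * a * b) * t.prod]
        = p ++ (b :: t) ++ [(b :: t).prod⁻¹ * a * (b :: t).prod] := by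
      simp [mul_assoc]
    rw [e1, e2] at h2
    exact braidEquiv_trans h1 h2

/-- Single rotation, when the product is 1. -/
lemma braidEquiv_rotate_one (a : G) (t : List G) (hp : (a :: t).prod = 1) :
    BraidEquiv G (a :: t) (t ++ [a]) := by
  have ht : t.prod = a⁻¹ := by
    have := hp
    rw [List.prod_cons] at this
    exact eq_inv_of_mul_eq_one_right (by rw [← this])
  have h := braidEquiv_push' t [] a
  simp only [List.nil_append] at h
  rw [ht] at h
  simpa using h

/-- Full rotation, when the product is 1. -/
lemma braidEquiv_rotate (p : List G) : ∀ s : List G, (p ++ s).prod = 1 →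
    BraidEquiv G (p ++ s) (s ++ p) := by
  induction p with
  | nil => intro s _; simp; exact braidEquiv_refl _
  | cons a p ih =>
    intro s hp
    have h1 : BraidEquiv G (a :: (p ++ s)) ((p ++ s) ++ [a]) :=
      braidEquiv_rotate_one a (p ++ s) (by simpa using hp)
    have h2 : (p ++ (s ++ [a])).prod = 1 := by
      rw [← List.append_assoc, ← braidEquiv_prod h1]
      simpa using hp
    have h3 := ih (s ++ [a]) h2
    have e1 : p ++ s ++ [a] = p ++ (s ++ [a]) := by simp
    have e2 : (s ++ [a]) ++ p = s ++ (a :: p) := by simp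
    rw [e1] at h1
    rw [e2] at h3
    exact braidEquiv_trans h1 h3

/-- Core: conjugation by an entry of the list. -/
lemma braidEquiv_conj_mem {l : List G} (hl : l.prod = 1) {x : G} (hx : x ∈ l) :
    BraidEquiv G l (conjList x l) := by
  obtain ⟨p, s, rfl⟩ := List.append_of_mem hx
  -- step 1: rotate x to the front
  have h1 : BraidEquiv G (p ++ x :: s) ((x :: s) ++ p) := braidEquiv_rotate p (x :: s) hl
  -- step 2: push x to the back, conjugating
  have h2 : BraidEquiv G (x :: (s ++ p)) (conjList x (s ++ p) ++ [x]) :=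
    braidEquiv_push (s ++ p) [] x
  have h12 : BraidEquiv G (p ++ x :: s) (conjList x s ++ (conjList x p ++ [x])) := by
    refine braidEquiv_trans h1 ?_
    have : (x :: s) ++ p = x :: (s ++ p) := by simp
    rw [this]
    refine braidEquiv_trans h2 ?_
    rw [conjList_append]
    simp only [List.append_assoc]
    exact braidEquiv_refl _
  -- step 3: rotate back
  have hprod : (conjList x s ++ (conjList x p ++ [x])).prod = 1 := by
    rw [← braidEquiv_prod h12]; exact hl
  have h3 := braidEquiv_rotate (conjList x s) (conjList x p ++ [x]) hprod
  refine braidEquiv_trans h12 (braidEquiv_trans h3 ?_)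
  have : (conjList x p ++ [x]) ++ conjList x s = conjList x (p ++ x :: s) := by
    rw [conjList_append, conjList_cons]
    simp
  rw [this]
  exact braidEquiv_refl _

end Aux

/-- a tuple of product  is braid-equivalent to its conjugate by any
element of the subgroup generated by its entries. -/
theorem braidEquiv_conj {G : Type*} [Group G] (l : List G) (hl : l.prod = 1)
    (h : G) (hmem : h ∈ Subgroup.closure {x | x ∈ l}) :
    BraidEquiv G l (conjList h l) := by
  induction hmem using Subgroup.closure_induction with
  | mem x hx => exact braidEquiv_conj_mem hl hx
  | one => rw [conjList_one]; exact braidEquiv_refl _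
  | mul a b _ _ iha ihb =>
    refine braidEquiv_trans iha ?_
    have := braidEquiv_conj_map a ihb
    rw [conjList_conjList] at this
    exact this
  | inv a _ iha =>
    have := braidEquiv_conj_map a⁻¹ iha
    rw [conjList_conjList, inv_mul_cancel, conjList_one] at this
    exact braidEquiv_symm this
end

section
/- Let d ≥ 2 and let ḡ = (g_1,…,g_n) be a tuple of transpositions in the symmetric group S_d with g_1 g_2 ⋯ g_n = 1 (the identity permutation). Then: (1) n is even, say n = 2n'; (2) ḡ is braid-equivalent to a tuple of the form (h_1,h_1,h_2,h_2,…,h_{n'},h_{n'}) for some transpositions h_1,…,h_{n'}; (3) the subgroup ⟨ḡ⟩ of S_d generated by g_1,…,g_n is exactly the set of permutations σ ∈ S_d such that σ(a) lies in the same connected component of 𝒢(ḡ) as a, for every a ∈ {1,…,d} (i.e., ⟨ḡ⟩ = Π_{Σ ∈ I(ḡ)} S_Σ); and (4) if ḡ' = (g'_1,…,g'_n) is another tuple of transpositions in S_d with product 1, then ḡ and ḡ' are braid-equivalent if and only if I(ḡ) = I(ḡ') and, for every block Σ of this partition, the number of indices i with g_i = (a b) for some a,b ∈ Σ equals the corresponding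 number for ḡ'. -/
/-!
Hurwitz moves preserve the product, the length and the subgroup generated by the entries, hence
the components of the graph and the number of entries in each block. Carrying the last entry
that moves the first point of `g₁` to the front produces two equal adjacent transpositions;
such a pair commutes with everything, so splitting pairs off shows that `ḡ` is braid-equivalent
to a doubled tuple. A pair `(t, t)` can also be conjugated by any other entry, so braid
equivalence of doubled tuples follows from equivalence of the halves under reordering and
conjugating one entry by another ("slides"). Two lists of transpositions with the same blocks
and block counts are slide-equivalent: a point `v` of a block with at least three points is
made, by slides, a leaf attached to a fixed neighbour `m`, and the leaf `(v m)` is split off;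
when all blocks have at most two points the lists are permutations of each other.
-/

open scoped Classical

/-- Doubling a list: `(h₁,…,h_m) ↦ (h₁,h₁,h₂,h₂,…,h_m,h_m)`. -/
def doubleList {α : Type*} : List α → List α
  | [] => []
  | a :: t => a :: a :: doubleList t

/-- `a` and `b` lie in the same connected component of the multigraph `𝒢(ḡ)`
associated to a tuple of transpositions `ḡ` (edges of `𝒢(ḡ)` join `u` and `v`
whenever the transposition `(u v)` occurs in `ḡ`). -/
def Reach {d : ℕ} (g : List (Equiv.Perm (Fin d))) (a b : Fin d) : Prop :=
  Relation.ReflTransGen (fun u v => Equiv.swap u v ∈ g) a b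

/-- The number of entries of `l` which are transpositions of two points in the
connected component of `a` in the multigraph of `base`. -/
noncomputable def blockCount {d : ℕ} (l base : List (Equiv.Perm (Fin d))) (a : Fin d) : ℕ :=
  l.countP (fun x => decide (∀ b : Fin d, x b ≠ b → Reach base a b))


open Equiv

theorem countP_erase_add_one {α : Type*} [DecidableEq α] {l : List α} {a : α} {p : α → Bool}
    (ha : a ∈ l) (hp : p a) : (l.erase a).countP p + 1 = l.countP p := by
  simpa [hp] using ((List.perm_cons_erase ha).countP_eq p).symm

theorem Relation.EqvGen.apply_eq {α β : Type*} {r : α → α → Prop} (f : α → β)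
    (hf : ∀ a b, r a b → f a = f b) {a b : α} (h : Relation.EqvGen r a b) : f a = f b :=
  congrArg (Quot.lift f hf) (Quot.eqvGen_sound h)

section Slides

variable {G : Type*} [Group G]

theorem conj_mul_self_eq_one {t : G} (ht : t * t = 1) (s : G) :
    s * t * s⁻¹ * (s * t * s⁻¹) = 1 := by
  calc s * t * s⁻¹ * (s * t * s⁻¹) = s * (t * t) * s⁻¹ := by group
    _ = 1 := by rw [ht]; group

inductive SlideStep : List G → List G → Prop
  | perm {l l' : List G} : l.Perm l' → SlideStep l l'
  | conj {s : G} (t : G) {l : List G} : s ∈ l → SlideStep (t :: l) (s * t * s⁻¹ :: l)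

def SlideEquiv : List G → List G → Prop := Relation.EqvGen SlideStep

namespace SlideEquiv

variable {l l' l'' : List G}

theorem refl (l : List G) : SlideEquiv l l := Relation.EqvGen.refl l

theorem symm (h : SlideEquiv l l') : SlideEquiv l' l := Relation.EqvGen.symm _ _ h

theorem trans (h : SlideEquiv l l') (h' : SlideEquiv l' l'') : SlideEquiv l l'' :=
  Relation.EqvGen.trans _ _ _ h h'

theorem of_perm (h : l.Perm l') : SlideEquiv l l' := Relation.EqvGen.rel _ _ (.perm h)

theorem conj {s : G} (t : G) (hs : s ∈ l) : SlideEquiv (t :: l) (s * t * s⁻¹ :: l) :=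
  Relation.EqvGen.rel _ _ (.conj t hs)

theorem conj_erase [DecidableEq G] {σ τ : G} (hσ : σ ∈ l) (hτ : τ ∈ l) (hne : τ ≠ σ) :
    SlideEquiv l (τ * σ * τ⁻¹ :: l.erase σ) :=
  (of_perm (List.perm_cons_erase hσ)).trans (conj σ ((List.mem_erase_of_ne hne).2 hτ))

theorem cons (a : G) (h : SlideEquiv l l') : SlideEquiv (a :: l) (a :: l') := by
  induction h with
  | rel _ _ hstep =>
    cases hstep with
    | perm h => exact of_perm (h.cons a)
    | conj t hs =>
      exact (of_perm (.swap t a _)).trans <|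
        ((conj t (List.mem_cons_of_mem a hs)).trans (of_perm (.swap a _ _)))
  | refl => exact refl _
  | symm _ _ _ ih => exact ih.symm
  | trans _ _ _ _ _ ih ih' => exact ih.trans ih'

theorem length_eq (h : SlideEquiv l l') : l.length = l'.length :=
  Relation.EqvGen.apply_eq List.length (fun _ _ hstep => by
    cases hstep with
    | perm h => exact h.length_eq
    | conj => rfl) h

theorem closure_eq (h : SlideEquiv l l') :
    Subgroup.closure {x | x ∈ l} = Subgroup.closure {x | x ∈ l'} := by
  refine Relation.EqvGen.apply_eq (fun l : List G => Subgroup.closure {x | x ∈ l})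
    (fun _ _ hstep => ?_) h
  cases hstep with
  | perm h => simp only [h.mem_iff]
  | @conj s t l hs =>
    have mem : ∀ {x : G} {l' : List G}, x ∈ l' → x ∈ Subgroup.closure {x | x ∈ l'} :=
      fun h => Subgroup.subset_closure h
    apply le_antisymm <;> refine Subgroup.closure_le _ |>.2 fun x hx => ?_ <;>
      rcases List.mem_cons.1 hx with rfl | hx
    · have hs := mem (List.mem_cons_of_mem (s * x * s⁻¹) hs)
      simpa [mul_assoc] using mul_mem (mul_mem (inv_mem hs) (mem List.mem_cons_self)) hs
    · exact mem (List.mem_cons_of_mem _ hx)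
    · have hs := mem (List.mem_cons_of_mem t hs)
      exact mul_mem (mul_mem hs (mem List.mem_cons_self)) (inv_mem hs)
    · exact mem (List.mem_cons_of_mem _ hx)

theorem forall_mem_iff {C : Set G} (hC : ∀ g x, x ∈ C → g * x * g⁻¹ ∈ C)
    (h : SlideEquiv l l') : (∀ x ∈ l, x ∈ C) ↔ ∀ x ∈ l', x ∈ C := by
  refine Iff.of_eq <| Relation.EqvGen.apply_eq (fun l : List G => ∀ x ∈ l, x ∈ C)
    (fun _ _ hstep => ?_) h
  cases hstep with
  | perm h => simp only [h.mem_iff]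
  | @conj s t l hs =>
    refine propext ⟨fun H x hx => ?_, fun H x hx => ?_⟩ <;> rcases List.mem_cons.1 hx with rfl | hx
    · exact hC s t (H t List.mem_cons_self)
    · exact H x (List.mem_cons_of_mem _ hx)
    · simpa [mul_assoc] using hC s⁻¹ _ (H _ List.mem_cons_self)
    · exact H x (List.mem_cons_of_mem _ hx)

theorem countP_eq (h : SlideEquiv l l') {p : G → Bool}
    (hp : ∀ σ ∈ Subgroup.closure {x | x ∈ l}, ∀ x, p (σ * x * σ⁻¹) = p x) :
    l.countP p = l'.countP p := by
  induction h with
  | rel _ _ hstep =>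
    cases hstep with
    | perm h => exact h.countP_eq p
    | conj t hs => simp only [List.countP_cons, hp _ (Subgroup.subset_closure
        (List.mem_cons_of_mem t hs))]
  | refl => rfl
  | symm _ _ h ih => exact (ih (closure_eq h ▸ hp)).symm
  | trans _ _ _ h _ ih ih' => exact (ih hp).trans (ih' (closure_eq h ▸ hp))

end SlideEquiv

end Slides

section Braids

variable {G : Type*} [Group G] {l l' l'' : List G}

namespace BraidEquiv

theorem refl (l : List G) : BraidEquiv G l l := Relation.EqvGen.refl l

theorem symm (h : BraidEquiv G l l') : BraidEquiv G l' l := Relation.EqvGen.symm _ _ h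

theorem trans (h : BraidEquiv G l l') (h' : BraidEquiv G l' l'') : BraidEquiv G l l'' :=
  Relation.EqvGen.trans _ _ _ h h'

theorem move (l₁ l₂ : List G) (a b : G) :
    BraidEquiv G (l₁ ++ a :: b :: l₂) (l₁ ++ (a * b * a⁻¹) :: a :: l₂) :=
  Relation.EqvGen.rel _ _ (.mk l₁ l₂ a b)

theorem move_inv (l₁ l₂ : List G) (a b : G) :
    BraidEquiv G (l₁ ++ a :: b :: l₂) (l₁ ++ b :: (b⁻¹ * a * b) :: l₂) := by
  simpa [mul_assoc] using (move l₁ l₂ b (b⁻¹ * a * b)).symm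

theorem append_left (c : List G) (h : BraidEquiv G l l') :
    BraidEquiv G (c ++ l) (c ++ l') := by
  induction h with
  | rel _ _ hmove =>
    obtain ⟨l₁, l₂, a, b⟩ := hmove
    simpa using move (c ++ l₁) l₂ a b
  | refl => exact refl _
  | symm _ _ _ ih => exact ih.symm
  | trans _ _ _ _ _ ih ih' => exact ih.trans ih'

theorem cons (a : G) (h : BraidEquiv G l l') : BraidEquiv G (a :: l) (a :: l') :=
  h.append_left [a]

theorem slideEquiv (h : BraidEquiv G l l') : SlideEquiv l l' := by
  refine (Relation.EqvGen.is_equivalence _).eqvGen_iff.1 (Relation.EqvGen.mono ?_ _ _ h)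
  rintro _ _ ⟨l₁, l₂, a, b⟩
  have hb : (l₁ ++ a :: b :: l₂).Perm (b :: (l₁ ++ a :: l₂)) := by
    simpa using List.perm_middle (l₁ := l₁ ++ [a]) (a := b) (l₂ := l₂)
  exact ((SlideEquiv.of_perm hb).trans (SlideEquiv.conj b (by simp))).trans
    (SlideEquiv.of_perm List.perm_middle.symm)

theorem prod_eq (h : BraidEquiv G l l') : l.prod = l'.prod :=
  Relation.EqvGen.apply_eq List.prod (fun _ _ ⟨l₁, l₂, a, b⟩ => by simp [mul_assoc]) h

section Pairs

variable {t : G}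

theorem pair_cons (ht : t * t = 1) (a : G) (l : List G) :
    BraidEquiv G (t :: t :: a :: l) (a :: t :: t :: l) := by
  have hta : t * (t * a * t⁻¹) * t⁻¹ = a := by
    calc t * (t * a * t⁻¹) * t⁻¹ = t * t * a * (t * t)⁻¹ := by group
      _ = a := by rw [ht]; group
  simpa [hta] using (move [t] l t a).trans (move [] (t :: l) t (t * a * t⁻¹))

theorem pair_append (ht : t * t = 1) (c l : List G) :
    BraidEquiv G (t :: t :: (c ++ l)) (c ++ t :: t :: l) := by
  induction c with
  | nil => exact refl _
  | cons a c ih => exact (pair_cons ht a (c ++ l)).trans (ih.cons a)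

theorem pair_conj_of_mem (ht : t * t = 1) {s : G} {l : List G} (hs : s ∈ l) :
    BraidEquiv G (t :: t :: l) (s * t * s⁻¹ :: s * t * s⁻¹ :: l) := by
  obtain ⟨c, l₂, rfl⟩ := List.append_of_mem hs
  have conj_pair : BraidEquiv G (s :: t :: t :: l₂) (s * t * s⁻¹ :: s * t * s⁻¹ :: s :: l₂) :=
    (move [] (t :: l₂) s t).trans (move [s * t * s⁻¹] l₂ s t)
  exact (pair_append ht c _).trans (((pair_cons ht s l₂).append_left c).trans
    ((conj_pair.append_left c).trans (pair_append (conj_mul_self_eq_one ht s) c _).symm))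

end Pairs

end BraidEquiv

end Braids

section Doubling

variable {α : Type*}

theorem mem_doubleList {x : α} {l : List α} : x ∈ doubleList l ↔ x ∈ l := by
  induction l with
  | nil => simp [doubleList]
  | cons a l ih => simp [doubleList, ih]

theorem length_doubleList (l : List α) : (doubleList l).length = 2 * l.length := by
  induction l with
  | nil => rfl
  | cons a l ih => simp [doubleList, ih]; ring

theorem countP_doubleList (p : α → Bool) (l : List α) :
    (doubleList l).countP p = 2 * l.countP p := by
  induction l with
  | nil => rfl
  | cons a l ih => simp only [doubleList, List.countP_cons, ih]; ring

variable {G : Type*} [Group G] {l l' : List G}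

theorem BraidEquiv.doubleList_of_perm (h : l.Perm l') (hl : ∀ x ∈ l, x * x = 1) :
    BraidEquiv G (doubleList l) (doubleList l') := by
  induction h with
  | nil => exact .refl _
  | cons x _ ih => exact ((ih fun y hy => hl y (.tail x hy)).cons x).cons x
  | swap x y l =>
    have hy := hl y List.mem_cons_self
    exact (BraidEquiv.pair_cons hy x _).trans ((BraidEquiv.pair_cons hy x _).cons x)
  | trans h _ ih ih' => exact (ih hl).trans (ih' fun y hy => hl y (h.mem_iff.2 hy))

theorem SlideEquiv.braidEquiv_doubleList (h : SlideEquiv l l') (hl : ∀ x ∈ l, x * x = 1) :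
    BraidEquiv G (doubleList l) (doubleList l') := by
  have hC : ∀ (g x : G), x ∈ {x : G | x * x = 1} → g * x * g⁻¹ ∈ {x : G | x * x = 1} :=
    fun g _ hx => conj_mul_self_eq_one hx g
  induction h with
  | rel _ _ hstep =>
    cases hstep with
    | perm h => exact .doubleList_of_perm h hl
    | conj t hs =>
      exact BraidEquiv.pair_conj_of_mem (hl t List.mem_cons_self) (mem_doubleList.2 hs)
  | refl => exact .refl _
  | symm _ _ h ih => exact (ih ((forall_mem_iff hC h).2 hl)).symm
  | trans _ _ _ h _ ih ih' => exact (ih hl).trans (ih' ((forall_mem_iff hC h).1 hl))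

end Doubling

section Transpositions

variable {α : Type*} [DecidableEq α] {σ τ : Perm α} {x : α}

namespace Equiv.Perm.IsSwap

theorem mul_self (h : σ.IsSwap) : σ * σ = 1 := by
  obtain ⟨x, y, -, rfl⟩ := h
  exact swap_mul_self x y

theorem conj (h : σ.IsSwap) (τ : Perm α) : (τ * σ * τ⁻¹).IsSwap := by
  obtain ⟨x, y, hxy, rfl⟩ := h
  exact ⟨τ x, τ y, τ.injective.ne hxy, (swap_apply_apply τ x y).symm⟩

theorem eq_swap_apply (h : σ.IsSwap) (hx : σ x ≠ x) : σ = swap x (σ x) := by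
  obtain ⟨y, z, -, rfl⟩ := h
  rcases eq_or_ne x y with rfl | hy
  · rw [swap_apply_left]
  rcases eq_or_ne x z with rfl | hz
  · rw [swap_apply_right, swap_comm]
  · exact absurd (swap_apply_of_ne_of_ne hy hz) hx

theorem apply_apply_of_ne (hσ : σ.IsSwap) (hτ : τ.IsSwap) (hσx : σ x ≠ x) (hτx : τ x ≠ x)
    (hne : σ ≠ τ) : σ (τ x) = τ x := by
  rw [hσ.eq_swap_apply hσx]
  refine swap_apply_of_ne_of_ne hτx fun h => hne ?_
  rw [hσ.eq_swap_apply hσx, hτ.eq_swap_apply hτx, h]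

end Equiv.Perm.IsSwap

theorem SlideEquiv.forall_isSwap {l l' : List (Perm α)} (h : SlideEquiv l l')
    (hl : ∀ σ ∈ l, σ.IsSwap) : ∀ σ ∈ l', σ.IsSwap :=
  (forall_mem_iff (C := {σ : Perm α | σ.IsSwap}) (fun τ _ hσ => hσ.conj τ) h).1 hl

theorem exists_eq_append_cons_of_prod_apply_ne {l : List (Perm α)} (h : l.prod x ≠ x) :
    ∃ (l₁ : List (Perm α)) (b : Perm α) (l₂ : List (Perm α)),
      l = l₁ ++ b :: l₂ ∧ b x ≠ x ∧ l₂.prod x = x := by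
  induction l with
  | nil => simp at h
  | cons a l ih =>
    by_cases hl : l.prod x = x
    · exact ⟨[], a, l, rfl, by simpa [hl] using h, hl⟩
    · obtain ⟨l₁, b, l₂, rfl, hb, hl₂⟩ := ih hl
      exact ⟨a :: l₁, b, l₂, rfl, hb, hl₂⟩

/-- `b` is the last entry moving `x`. It travels left past each entry `a`, being conjugated by
`a` when `a` fixes `x` and conjugating `a` otherwise, so it stays the last entry moving `x`; it
either meets an equal entry or reaches the front, where the product forces `b = swap x y`. -/
theorem exists_braidEquiv_pair_of_last_mover {y : α} (m₁ : List (Perm α)) :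
    ∀ (b : Perm α) (m₂ : List (Perm α)), (∀ σ ∈ m₁ ++ b :: m₂, σ.IsSwap) →
      (m₁ ++ b :: m₂).prod = swap x y → b x ≠ x → m₂.prod x = x →
      ∃ t rest, BraidEquiv (Perm α) (swap x y :: (m₁ ++ b :: m₂)) (t :: t :: rest) := by
  induction m₁ using List.reverseRecOn with
  | nil =>
    intro b m₂ hsw hprod hbx hm₂
    have hby : b x = y := by simpa [hm₂] using congrArg (· x) hprod
    refine ⟨swap x y, m₂, ?_⟩
    rw [List.nil_append, ← hby, ← (hsw b List.mem_cons_self).eq_swap_apply hbx]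
    exact .refl _
  | append_singleton m₁ a ih =>
    intro b m₂ hsw hprod hbx hm₂
    simp only [List.append_assoc, List.singleton_append] at hsw hprod ⊢
    have ha := hsw a (by simp)
    have hb := hsw b (by simp)
    by_cases hab : a = b
    · subst hab
      exact ⟨a, swap x y :: (m₁ ++ m₂),
        (BraidEquiv.pair_append ha.mul_self (swap x y :: m₁) m₂).symm⟩
    by_cases hax : a x = x
    · have hmove := BraidEquiv.move m₁ m₂ a b
      obtain ⟨t, rest, h⟩ := ih (a * b * a⁻¹) (a :: m₂) (hmove.slideEquiv.forall_isSwap hsw)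
        (hmove.prod_eq ▸ hprod)
        (by simpa [a.symm_apply_eq.2 hax.symm] using fun h => hbx (a.injective (h.trans hax.symm)))
        (by simp [hm₂, hax])
      exact ⟨t, rest, (hmove.cons _).trans h⟩
    · have hmove := BraidEquiv.move_inv m₁ m₂ a b
      obtain ⟨t, rest, h⟩ := ih b (b⁻¹ * a * b :: m₂) (hmove.slideEquiv.forall_isSwap hsw)
        (hmove.prod_eq ▸ hprod) hbx (by simp [hm₂, ha.apply_apply_of_ne hb hax hbx hab])
      exact ⟨t, rest, (hmove.cons _).trans h⟩

theorem exists_braidEquiv_pair {l : List (Perm α)} (hl : ∀ σ ∈ l, σ.IsSwap) (hprod : l.prod = 1)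
    (hne : l ≠ []) : ∃ t rest, BraidEquiv (Perm α) l (t :: t :: rest) := by
  obtain ⟨g, m, rfl⟩ := List.exists_cons_of_ne_nil hne
  obtain ⟨x, y, hxy, rfl⟩ := hl g List.mem_cons_self
  have hm : m.prod = swap x y := by
    rw [List.prod_cons, mul_eq_one_iff_eq_inv', swap_inv] at hprod
    exact hprod
  obtain ⟨m₁, b, m₂, rfl, hbx, hm₂⟩ := exists_eq_append_cons_of_prod_apply_ne (x := x)
    (by rw [hm, swap_apply_left]; exact hxy.symm)
  exact exists_braidEquiv_pair_of_last_mover m₁ b m₂ (fun σ hσ => hl σ (.tail _ hσ)) hm hbx hm₂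

theorem exists_braidEquiv_doubleList {l : List (Perm α)} (hl : ∀ σ ∈ l, σ.IsSwap)
    (hprod : l.prod = 1) :
    ∃ hs : List (Perm α), (∀ σ ∈ hs, σ.IsSwap) ∧ BraidEquiv (Perm α) l (doubleList hs) := by
  induction hlen : l.length using Nat.strong_induction_on generalizing l with
  | _ n ih =>
    rcases eq_or_ne l [] with rfl | hne
    · exact ⟨[], by simp, .refl _⟩
    obtain ⟨t, rest, h⟩ := exists_braidEquiv_pair hl hprod hne
    have hsw := h.slideEquiv.forall_isSwap hl
    have ht := (hsw t List.mem_cons_self).mul_self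
    have hrest : rest.prod = 1 := by
      simpa [hprod, ← mul_assoc, ht, eq_comm] using h.prod_eq
    have hlen' : rest.length < n := by
      have := h.slideEquiv.length_eq
      simp only [List.length_cons] at this
      omega
    obtain ⟨hs, hhs, h'⟩ := ih _ hlen' (fun σ hσ => hsw σ (by simp [hσ])) hrest rfl
    refine ⟨t :: hs, ?_, h.trans ((h'.cons t).cons t)⟩
    simpa [hsw t List.mem_cons_self] using hhs

end Transpositions

section Reach

variable {d : ℕ} {g l l' r : List (Perm (Fin d))} {a b v : Fin d}

theorem Reach.symm (h : Reach g a b) : Reach g b a := by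
  induction h with
  | refl => exact .refl
  | tail _ hbc ih => exact ih.head (by rwa [swap_comm])

theorem Reach.mem_of_closed {S : Set (Fin d)} (hS : ∀ u w, swap u w ∈ g → u ∈ S → w ∈ S)
    (h : Reach g a b) (ha : a ∈ S) : b ∈ S := by
  induction h with
  | refl => exact ha
  | tail _ hedge ih => exact hS _ _ hedge ih

theorem reach_apply {σ : Perm (Fin d)} (hσ : σ ∈ g) (hsw : σ.IsSwap) (a : Fin d) :
    Reach g a (σ a) := by
  by_cases ha : σ a = a
  · rw [ha]
    exact .refl
  · exact .single (hsw.eq_swap_apply ha ▸ hσ)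

theorem reach_apply_of_mem_closure (hg : ∀ σ ∈ g, σ.IsSwap) {σ : Perm (Fin d)}
    (hσ : σ ∈ Subgroup.closure {x | x ∈ g}) (a : Fin d) : Reach g a (σ a) := by
  induction hσ using Subgroup.closure_induction generalizing a with
  | mem σ hσ => exact reach_apply hσ (hg σ hσ) a
  | one => exact .refl
  | mul σ τ _ _ hσ hτ => exact (hτ a).trans (hσ (τ a))
  | inv σ _ hσ => simpa using (hσ (σ⁻¹ a)).symm

theorem reach_iff_mem_orbit (hg : ∀ σ ∈ g, σ.IsSwap) :
    Reach g a b ↔ b ∈ MulAction.orbit (Subgroup.closure {x | x ∈ g}) a := by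
  refine ⟨fun h => ?_, fun ⟨⟨σ, hσ⟩, hb⟩ => hb ▸ reach_apply_of_mem_closure hg hσ a⟩
  induction h with
  | refl => exact MulAction.mem_orbit_self a
  | @tail b c _ hedge ih =>
    obtain ⟨σ, rfl⟩ := ih
    exact ⟨⟨swap _ c, Subgroup.subset_closure hedge⟩ * σ, by simp [mul_smul]⟩

theorem mem_closure_iff_forall_reach (hg : ∀ σ ∈ g, σ.IsSwap) (σ : Perm (Fin d)) :
    σ ∈ Subgroup.closure {x | x ∈ g} ↔ ∀ a, Reach g a (σ a) := by
  rw [mem_closure_isSwap (S := {x | x ∈ g}) hg]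
  simp [reach_iff_mem_orbit hg, Set.toFinite]

theorem SlideEquiv.reach_iff (h : SlideEquiv l l') (hl : ∀ σ ∈ l, σ.IsSwap) :
    Reach l a b ↔ Reach l' a b := by
  rw [reach_iff_mem_orbit hl, reach_iff_mem_orbit (h.forall_isSwap hl), h.closure_eq]

theorem reach_doubleList : Reach (doubleList l) a b ↔ Reach l a b := by
  simp only [Reach, mem_doubleList]

theorem eq_of_reach_of_forall_apply_eq (hr : ∀ σ ∈ r, σ v = v) (h : Reach r v b) : b = v :=
  h.mem_of_closed (S := {v}) (fun u w hedge hu => by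
    rw [Set.mem_singleton_iff] at hu ⊢
    simpa [hu] using hr _ hedge) rfl

theorem reach_iff_reach_cons_swap {m : Fin d} (hm : m ≠ v) (hr : ∀ σ ∈ r, σ v = v) :
    Reach r a b ↔ Reach (swap v m :: r) a b ∧ (a = v ↔ b = v) := by
  constructor
  · intro h
    refine ⟨Relation.ReflTransGen.mono (fun _ _ => List.mem_cons_of_mem _) _ _ h,
      fun ha => ?_, fun hb => ?_⟩
    · exact eq_of_reach_of_forall_apply_eq hr (ha ▸ h)
    · exact eq_of_reach_of_forall_apply_eq hr (hb ▸ h.symm)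
  rintro ⟨h, hab⟩
  by_cases ha : a = v
  · rw [hab.1 ha, ha]
    exact .refl
  have hb : b ≠ v := fun hb => ha (hab.2 hb)
  let collapse : Fin d → Fin d := fun x => if x = v then m else x
  have hcollapse : Reach r (collapse a) (collapse b) := by
    refine Relation.ReflTransGen.lift' collapse (fun u w hedge => ?_) _ _ h
    rcases eq_or_ne u w with rfl | huw
    · exact .refl
    rcases List.mem_cons.1 hedge with hedge | hedge
    · have hmoved : ∀ x, swap u w x ≠ x → collapse x = m := fun x hx => by
        rw [hedge, swap_apply_ne_self_iff] at hx
        rcases hx.2 with rfl | rfl <;> simp [collapse]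
      show Reach r (collapse u) (collapse w)
      rw [hmoved u (by simpa using huw.symm), hmoved w (by simpa using huw)]
      exact .refl
    · have hv := hr _ hedge
      have hu : u ≠ v := by rintro rfl; simp at hv; exact huw hv.symm
      have hw : w ≠ v := by rintro rfl; simp at hv; exact huw hv
      show Reach r (collapse u) (collapse w)
      simp only [collapse, if_neg hu, if_neg hw]
      exact .single hedge
  simpa [collapse, ha, hb] using hcollapse

end Reach

section BlockCount

variable {d : ℕ} {l l' base base' r : List (Perm (Fin d))} {a v : Fin d}

theorem blockCount_congr (h : ∀ σ ∈ l, ∀ b, σ b ≠ b → (Reach base a b ↔ Reach base' a b)) :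
    blockCount l base a = blockCount l base' a := by
  refine List.countP_congr fun σ hσ => ?_
  simp only [decide_eq_true_eq]
  exact forall_congr' fun b => imp_congr_right (h σ hσ b)

theorem blockCount_doubleList : blockCount (doubleList l) base a = 2 * blockCount l base a :=
  countP_doubleList _ _

/-- Elements of the closure of `l` preserve the components of `base`, so conjugating by them
does not change which entries lie in the component of `a`. -/
theorem SlideEquiv.blockCount_eq (h : SlideEquiv l l') (hl : ∀ σ ∈ l, σ.IsSwap)
    (hbase : ∀ a b, Reach l a b → Reach base a b) :
    blockCount l base a = blockCount l' base a := by
  refine h.countP_eq fun σ hσ x => ?_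
  have hσb : ∀ b, Reach base a (σ b) ↔ Reach base a b := fun b =>
    have hb := hbase _ _ (reach_apply_of_mem_closure hl hσ b)
    ⟨fun h => h.trans hb.symm, fun h => h.trans hb⟩
  refine decide_eq_decide.2
    ⟨fun H b hb => (hσb b).1 (H (σ b) (by simpa using hb)), fun H b hb => ?_⟩
  have := (hσb (σ⁻¹ b)).2 (H (σ⁻¹ b) fun h => hb (by rw [Perm.mul_apply, Perm.mul_apply, h]; simp))
  simpa using this

theorem blockCount_eq_zero (hl : ∀ σ ∈ l, σ.IsSwap) (hlv : ∀ σ ∈ l, σ v = v)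
    (hr : ∀ σ ∈ r, σ v = v) : blockCount l r v = 0 := by
  refine List.countP_eq_zero.2 fun σ hσ hp => ?_
  obtain ⟨c, e, hce, rfl⟩ := hl σ hσ
  have hc : c = v :=
    eq_of_reach_of_forall_apply_eq hr (of_decide_eq_true hp c (by simpa using hce.symm))
  subst hc
  have he := hlv _ hσ
  simp only [swap_apply_left] at he
  exact hce he.symm

end BlockCount

section Peeling

variable {d : ℕ} {h r : List (Perm (Fin d))} {v m m' : Fin d}

/-- Conjugating one of two distinct transpositions `(v p)`, `(v q)` by the other gives `(q p)`,
which no longer moves `v`. -/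
theorem exists_slideEquiv_countP_lt (hsw : ∀ σ ∈ h, σ.IsSwap)
    (htwo : ∃ σ ∈ h, ∃ τ ∈ h, σ v ≠ v ∧ τ v ≠ v ∧ σ ≠ τ) :
    ∃ h', SlideEquiv h h' ∧ h'.countP (· v ≠ v) < h.countP (· v ≠ v) := by
  obtain ⟨σ, hσ, τ, hτ, hσv, hτv, hne⟩ := htwo
  refine ⟨_, SlideEquiv.conj_erase hσ hτ hne.symm, ?_⟩
  have hfix : (τ * σ * τ⁻¹) v = v := by
    have hττ := congrArg (· v) (hsw τ hτ).mul_self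
    simp only [Perm.mul_apply, Perm.one_apply] at hττ
    rw [Perm.mul_apply, Perm.mul_apply, Perm.inv_eq_iff_eq.2 hττ.symm,
      (hsw σ hσ).apply_apply_of_ne (hsw τ hτ) hσv hτv hne, hττ]
  rw [← countP_erase_add_one (p := (· v ≠ v)) hσ (decide_eq_true hσv), List.countP_cons]
  simp [hfix]

theorem exists_swap_mem_of_forall_mover_eq {p b : Fin d}
    (hall : ∀ σ ∈ h, σ v ≠ v → σ = swap v p) (hb : Reach h v b) (hbv : b ≠ v) (hbp : b ≠ p) :
    ∃ z, swap p z ∈ h ∧ z ≠ v ∧ z ≠ p := by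
  by_contra! hno
  have hclosed : ∀ u w, swap u w ∈ h → u ∈ ({v, p} : Set (Fin d)) → w ∈ ({v, p} : Set _) := by
    rintro u w hedge (rfl | rfl)
    · by_cases hw : w = u
      · exact .inl hw
      · exact .inr (swap_injective_of_left u (hall _ hedge (by simpa using hw)))
    · by_cases hw : w = v
      · exact .inl hw
      · exact .inr (hno w hedge hw)
  rcases hb.mem_of_closed hclosed (.inl rfl) with h | h
  exacts [hbv h, hbp h]

/-- If every entry moving `v` is `(v p)`, a third point `z` of the component adjacent to `p`
turns one copy into `(v z)` by conjugation with `(p z)`. -/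
theorem exists_slideEquiv_two_movers {p b : Fin d} (hp : p ≠ v)
    (hall : ∀ σ ∈ h, σ v ≠ v → σ = swap v p) (hcount : 2 ≤ h.countP (· v ≠ v))
    (hb : Reach h v b) (hbv : b ≠ v) (hbp : b ≠ p) :
    ∃ h', SlideEquiv h h' ∧ h'.countP (· v ≠ v) = h.countP (· v ≠ v) ∧
      ∃ σ ∈ h', ∃ τ ∈ h', σ v ≠ v ∧ τ v ≠ v ∧ σ ≠ τ := by
  obtain ⟨z, hz, hzv, hzp⟩ := exists_swap_mem_of_forall_mover_eq hall hb hbv hbp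
  obtain ⟨σ, hσ, hσv⟩ : ∃ σ ∈ h, σ v ≠ v := by
    simpa using List.countP_pos_iff.1 (by omega : 0 < h.countP (· v ≠ v))
  have hσeq := hall σ hσ hσv
  subst hσeq
  have hne : swap p z ≠ swap v p := fun he => hp <| Eq.symm <| by
    simpa [swap_apply_of_ne_of_ne hp.symm hzv.symm] using congrArg (· v) he
  have hconj : swap p z * swap v p * (swap p z)⁻¹ = swap v z := by
    rw [← swap_apply_apply, swap_apply_of_ne_of_ne hp.symm hzv.symm, swap_apply_left]
  have hslide := SlideEquiv.conj_erase hσ hz hne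
  rw [hconj] at hslide
  have hrest := countP_erase_add_one (p := (· v ≠ v)) hσ (decide_eq_true hσv)
  obtain ⟨τ, hτ, hτv⟩ : ∃ τ ∈ h.erase (swap v p), τ v ≠ v := by
    simpa using List.countP_pos_iff.1 (by omega : 0 < (h.erase (swap v p)).countP (· v ≠ v))
  refine ⟨_, hslide, ?_, swap v z, List.mem_cons_self, τ, .tail _ hτ, by simpa using hzv,
    hτv, ?_⟩
  · rw [← hrest, List.countP_cons]
    simp [hzv]
  · rw [hall τ (List.mem_of_mem_erase hτ) hτv]
    exact fun he => hzp (swap_injective_of_left v he)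

theorem exists_slideEquiv_single_mover (hsw : ∀ σ ∈ h, σ.IsSwap) (hm : m ≠ v) (hm' : m' ≠ v)
    (hmm' : m ≠ m') (hrm : Reach h v m) (hrm' : Reach h v m') :
    ∃ w r, w ≠ v ∧ SlideEquiv h (swap v w :: r) ∧ ∀ σ ∈ r, σ v = v := by
  induction hn : h.countP (· v ≠ v) using Nat.strong_induction_on generalizing h with
  | _ n ih =>
    have recurse : ∀ h', SlideEquiv h h' → h'.countP (· v ≠ v) < n →
        ∃ w r, w ≠ v ∧ SlideEquiv h (swap v w :: r) ∧ ∀ σ ∈ r, σ v = v := by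
      intro h' hh' hlt
      obtain ⟨w, r, hw, hh'r, hr⟩ := ih _ hlt (hh'.forall_isSwap hsw)
        ((hh'.reach_iff hsw).1 hrm) ((hh'.reach_iff hsw).1 hrm') rfl
      exact ⟨w, r, hw, hh'.trans hh'r, hr⟩
    by_cases htwo : ∃ σ ∈ h, ∃ τ ∈ h, σ v ≠ v ∧ τ v ≠ v ∧ σ ≠ τ
    · obtain ⟨h', hh', hlt⟩ := exists_slideEquiv_countP_lt hsw htwo
      exact recurse h' hh' (hn ▸ hlt)
    push Not at htwo
    obtain ⟨σ, hσ, hσv⟩ : ∃ σ ∈ h, σ v ≠ v := by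
      by_contra! hfix
      exact hm (eq_of_reach_of_forall_apply_eq hfix hrm)
    have hall : ∀ τ ∈ h, τ v ≠ v → τ = swap v (σ v) := fun τ hτ hτv =>
      (htwo τ hτ σ hσ hτv hσv).trans ((hsw σ hσ).eq_swap_apply hσv)
    have hrest := countP_erase_add_one (p := (· v ≠ v)) hσ (decide_eq_true hσv)
    by_cases hcount : 2 ≤ n
    · obtain ⟨b, hbv, hbp, hb⟩ : ∃ b, b ≠ v ∧ b ≠ σ v ∧ Reach h v b := by
        by_cases hmp : m = σ v
        · exact ⟨m', hm', hmp ▸ Ne.symm hmm', hrm'⟩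
        · exact ⟨m, hm, hmp, hrm⟩
      obtain ⟨h₁, hh₁, hcount₁, htwo₁⟩ :=
        exists_slideEquiv_two_movers hσv hall (hn ▸ hcount) hb hbv hbp
      obtain ⟨h₂, hh₂, hlt⟩ := exists_slideEquiv_countP_lt (hh₁.forall_isSwap hsw) htwo₁
      exact recurse h₂ (hh₁.trans hh₂) (by omega)
    · refine ⟨σ v, h.erase σ, hσv, ?_, fun τ hτ => ?_⟩
      · rw [← (hsw σ hσ).eq_swap_apply hσv]
        exact .of_perm (List.perm_cons_erase hσ)
      · have hzero : (h.erase σ).countP (· v ≠ v) = 0 := by omega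
        simpa using List.countP_eq_zero.1 hzero τ hτ

theorem slideEquiv_cons_swap_of_reach (hr : ∀ σ ∈ r, σ v = v) {w : Fin d} (hw : w ≠ v)
    (h : Reach r w m) : SlideEquiv (swap v w :: r) (swap v m :: r) := by
  induction h using Relation.ReflTransGen.head_induction_on with
  | refl => exact .refl _
  | @head u c hedge _ ih =>
    have hv := hr _ hedge
    have hc : c ≠ v := by
      rintro rfl
      simp at hv
      exact hw hv
    have hslide := SlideEquiv.conj (swap v u) hedge
    rw [← swap_apply_apply, hv, swap_apply_left] at hslide
    exact hslide.trans (ih hc)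

theorem exists_slideEquiv_cons_swap (hsw : ∀ σ ∈ h, σ.IsSwap) (hm : m ≠ v) (hm' : m' ≠ v)
    (hmm' : m ≠ m') (hrm : Reach h v m) (hrm' : Reach h v m') :
    ∃ r, SlideEquiv h (swap v m :: r) ∧ ∀ σ ∈ r, σ v = v := by
  obtain ⟨w, r, hw, hh, hr⟩ := exists_slideEquiv_single_mover hsw hm hm' hmm' hrm hrm'
  have hwm : Reach r w m := by
    refine (reach_iff_reach_cons_swap hw hr).2 ⟨?_, by simp [hw, hm]⟩
    have hvw : Reach (swap v w :: r) v w := .single List.mem_cons_self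
    exact hvw.symm.trans ((hh.reach_iff hsw).1 hrm)
  exact ⟨r, hh.trans (slideEquiv_cons_swap_of_reach hr hw hwm), hr⟩

end Peeling

section SameBlocks

variable {d : ℕ} {h h' : List (Perm (Fin d))}

structure SameBlocks (h h' : List (Perm (Fin d))) : Prop where
  isSwap_left : ∀ σ ∈ h, σ.IsSwap
  isSwap_right : ∀ σ ∈ h', σ.IsSwap
  reach_iff : ∀ a b, Reach h a b ↔ Reach h' a b
  blockCount_eq : ∀ a, blockCount h h a = blockCount h' h a

/-- In a block `{u, w}` of two points, every entry of the block is `(u w)`. -/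
theorem count_eq_blockCount {l : List (Perm (Fin d))} (hl : ∀ σ ∈ l, σ.IsSwap)
    (hsmall : ∀ v m m', m ≠ v → m' ≠ v → Reach h v m → Reach h v m' → m = m') {u w : Fin d}
    (huw : u ≠ w) (hr : Reach h u w) : l.count (swap u w) = blockCount l h u := by
  rw [List.count_eq_countP, blockCount]
  refine List.countP_congr fun σ hσ => ?_
  obtain ⟨c, e, hce, rfl⟩ := hl σ hσ
  have hblock : ∀ b, Reach h u b → b = u ∨ b = w := fun b hb => by
    by_cases hbu : b = u
    · exact .inl hbu
    · exact .inr (hsmall u b w hbu huw.symm hb hr)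
  have hmoved : ∀ b, swap c e b ≠ b ↔ b = c ∨ b = e := fun b => by
    simp [swap_apply_ne_self_iff, hce]
  simp only [beq_iff_eq, decide_eq_true_eq, hmoved]
  constructor
  · intro heq b hb
    rcases (swap_apply_ne_self_iff.1 (heq ▸ (hmoved b).2 hb)).2 with rfl | rfl
    exacts [.refl, hr]
  · intro H
    rcases hblock c (H c (.inl rfl)) with rfl | rfl <;>
      rcases hblock e (H e (.inr rfl)) with rfl | rfl
    exacts [absurd rfl hce, rfl, swap_comm _ _, absurd rfl hce]

namespace SameBlocks

theorem slideEquiv_of_small (H : SameBlocks h h')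
    (hsmall : ∀ v m m', m ≠ v → m' ≠ v → Reach h v m → Reach h v m' → m = m') :
    SlideEquiv h h' := by
  refine .of_perm (List.perm_iff_count.2 fun σ => ?_)
  by_cases hσ : σ ∈ h ∨ σ ∈ h'
  · obtain ⟨u, w, huw, rfl⟩ := hσ.elim (H.isSwap_left σ) (H.isSwap_right σ)
    have hr : Reach h u w :=
      hσ.elim (fun hσ => .single hσ) fun hσ => (H.reach_iff u w).2 (.single hσ)
    rw [count_eq_blockCount H.isSwap_left hsmall huw hr,
      count_eq_blockCount H.isSwap_right hsmall huw hr, H.blockCount_eq]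
  · push Not at hσ
    rw [List.count_eq_zero.2 hσ.1, List.count_eq_zero.2 hσ.2]

theorem exists_cons {v m m' : Fin d} (H : SameBlocks h h') (hm : m ≠ v) (hm' : m' ≠ v)
    (hmm' : m ≠ m') (hrm : Reach h v m) (hrm' : Reach h v m') :
    ∃ r r', SlideEquiv h (swap v m :: r) ∧ SlideEquiv h' (swap v m :: r') ∧ SameBlocks r r' := by
  obtain ⟨r, hh, hr⟩ := exists_slideEquiv_cons_swap H.isSwap_left hm hm' hmm' hrm hrm'
  obtain ⟨r', hh', hr'⟩ := exists_slideEquiv_cons_swap H.isSwap_right hm hm' hmm'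
    ((H.reach_iff _ _).1 hrm) ((H.reach_iff _ _).1 hrm')
  have hL : ∀ a b, Reach h a b ↔ Reach (swap v m :: r) a b := fun _ _ =>
    hh.reach_iff H.isSwap_left
  have hL' : ∀ a b, Reach h' a b ↔ Reach (swap v m :: r') a b := fun _ _ =>
    hh'.reach_iff H.isSwap_right
  have hsw := hh.forall_isSwap H.isSwap_left
  have hsw' := hh'.forall_isSwap H.isSwap_right
  refine ⟨r, r', hh, hh', fun σ hσ => hsw σ (.tail _ hσ), fun σ hσ => hsw' σ (.tail _ hσ),
    fun a b => ?_, fun a => ?_⟩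
  · rw [reach_iff_reach_cons_swap hm hr, reach_iff_reach_cons_swap hm hr', ← hL, ← hL',
      H.reach_iff]
  by_cases ha : a = v
  · subst ha
    rw [blockCount_eq_zero (fun σ hσ => hsw σ (.tail _ hσ)) hr hr,
      blockCount_eq_zero (fun σ hσ => hsw' σ (.tail _ hσ)) hr' hr]
  have hcount : blockCount r h a = blockCount r' h a := by
    have e := ((hh.blockCount_eq H.isSwap_left fun _ _ => id).symm.trans
      (H.blockCount_eq a)).trans
      (hh'.blockCount_eq H.isSwap_right fun a b hab => (H.reach_iff a b).2 hab)
    simpa [blockCount, List.countP_cons] using e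
  have hbase : ∀ l : List (Perm (Fin d)), (∀ σ ∈ l, σ v = v) →
      blockCount l r a = blockCount l h a := fun l hl => blockCount_congr fun σ hσ b hb => by
    have hbv : b ≠ v := fun hbv => hb (hbv ▸ hl σ hσ)
    rw [reach_iff_reach_cons_swap hm hr, ← hL]
    simp [ha, hbv]
  rw [hbase r hr, hbase r' hr', hcount]

theorem slideEquiv (H : SameBlocks h h') : SlideEquiv h h' := by
  induction hn : h.length using Nat.strong_induction_on generalizing h h' with
  | _ n ih =>
    by_cases hbig : ∃ v m m', m ≠ v ∧ m' ≠ v ∧ Reach h v m ∧ Reach h v m' ∧ m ≠ m'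
    · obtain ⟨v, m, m', hm, hm', hrm, hrm', hmm'⟩ := hbig
      obtain ⟨r, r', hh, hh', Hr⟩ := H.exists_cons hm hm' hmm' hrm hrm'
      have hlen : r.length < n := by
        have := hh.length_eq
        simp only [List.length_cons] at this
        omega
      exact hh.trans (((ih _ hlen Hr rfl).cons _).trans hh'.symm)
    · push Not at hbig
      exact H.slideEquiv_of_small hbig

end SameBlocks

theorem sameBlocks_of_braidEquiv_doubleList {g g' hs hs' : List (Perm (Fin d))}
    (hg : ∀ σ ∈ g, σ.IsSwap) (hg' : ∀ σ ∈ g', σ.IsSwap)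
    (hreach : ∀ a b, Reach g a b ↔ Reach g' a b)
    (hcount : ∀ a, blockCount g g a = blockCount g' g a)
    (hhs : ∀ σ ∈ hs, σ.IsSwap) (hhs' : ∀ σ ∈ hs', σ.IsSwap)
    (hbe : BraidEquiv (Perm (Fin d)) g (doubleList hs))
    (hbe' : BraidEquiv (Perm (Fin d)) g' (doubleList hs')) : SameBlocks hs hs' := by
  have hhalf : ∀ a b, Reach hs a b ↔ Reach g a b := fun a b =>
    reach_doubleList.symm.trans (hbe.slideEquiv.reach_iff hg).symm
  have hhalf' : ∀ a b, Reach hs' a b ↔ Reach g' a b := fun a b =>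
    reach_doubleList.symm.trans (hbe'.slideEquiv.reach_iff hg').symm
  refine ⟨hhs, hhs', fun a b => (hhalf a b).trans ((hreach a b).trans (hhalf' a b).symm),
    fun a => ?_⟩
  have hdouble : 2 * blockCount hs g a = 2 * blockCount hs' g a := by
    rw [← blockCount_doubleList, ← blockCount_doubleList,
      ← hbe.slideEquiv.blockCount_eq hg fun _ _ => id, hcount,
      hbe'.slideEquiv.blockCount_eq hg' fun a b hab => (hreach a b).2 hab]
  have hbase : ∀ l : List (Perm (Fin d)), blockCount l hs a = blockCount l g a := fun _ =>
    blockCount_congr fun _ _ b _ => hhalf a b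
  rw [hbase, hbase]
  omega

end SameBlocks

theorem symmetricGroup_braid_orbits_general
    (d : ℕ) (g : List (Equiv.Perm (Fin d)))
    (hswap : ∀ x ∈ g, x.IsSwap) (hprod : g.prod = 1) :
    Even g.length ∧
    (∃ hs : List (Equiv.Perm (Fin d)), (∀ x ∈ hs, x.IsSwap) ∧
        BraidEquiv (Equiv.Perm (Fin d)) g (doubleList hs)) ∧
    (∀ σ : Equiv.Perm (Fin d),
        σ ∈ Subgroup.closure {x | x ∈ g} ↔ ∀ a : Fin d, Reach g a (σ a)) ∧
    (∀ g' : List (Equiv.Perm (Fin d)), (∀ x ∈ g', x.IsSwap) → g'.prod = 1 →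
        g'.length = g.length →
        (BraidEquiv (Equiv.Perm (Fin d)) g g' ↔
          ((∀ a b : Fin d, Reach g a b ↔ Reach g' a b) ∧
            ∀ a : Fin d, blockCount g g a = blockCount g' g a))) := by
  obtain ⟨hs, hhs, hbe⟩ := exists_braidEquiv_doubleList hswap hprod
  refine ⟨?_, ⟨hs, hhs, hbe⟩, mem_closure_iff_forall_reach hswap, fun g' hswap' hprod' _ =>
    ⟨fun h => ⟨fun a b => h.slideEquiv.reach_iff hswap,
      fun a => h.slideEquiv.blockCount_eq hswap fun _ _ => id⟩, fun ⟨hreach, hcount⟩ => ?_⟩⟩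
  · rw [hbe.slideEquiv.length_eq, length_doubleList]
    exact even_two_mul _
  obtain ⟨hs', hhs', hbe'⟩ := exists_braidEquiv_doubleList hswap' hprod'
  have H := sameBlocks_of_braidEquiv_doubleList hswap hswap' hreach hcount hhs hhs' hbe hbe'
  exact hbe.trans ((H.slideEquiv.braidEquiv_doubleList fun σ hσ => (hhs σ hσ).mul_self).trans
    hbe'.symm)

/-- for a tuple `ḡ` of transpositions of `S_d` with product `1`:
(1) its length is even; (2) it is braid-equivalent to a tuple
`(h₁,h₁,…,h_{n'},h_{n'})` of doubled transpositions; (3) the subgroup it generates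
consists exactly of the permutations preserving each connected component of the
multigraph `𝒢(ḡ)` (i.e. it is `Π_{Σ ∈ I(ḡ)} S_Σ`); (4) another such tuple `ḡ'` is
braid-equivalent to `ḡ` iff it induces the same partition of `{1,…,d}` and the same
number of entries in each block. -/
theorem symmetricGroup_braid_orbits
    (d : ℕ) (hd : 2 ≤ d) (g : List (Equiv.Perm (Fin d)))
    (hswap : ∀ x ∈ g, x.IsSwap) (hprod : g.prod = 1) :
    Even g.length ∧
    (∃ hs : List (Equiv.Perm (Fin d)), (∀ x ∈ hs, x.IsSwap) ∧
        BraidEquiv (Equiv.Perm (Fin d)) g (doubleList hs)) ∧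
    (∀ σ : Equiv.Perm (Fin d),
        σ ∈ Subgroup.closure {x | x ∈ g} ↔ ∀ a : Fin d, Reach g a (σ a)) ∧
    (∀ g' : List (Equiv.Perm (Fin d)), (∀ x ∈ g', x.IsSwap) → g'.prod = 1 →
        g'.length = g.length →
        (BraidEquiv (Equiv.Perm (Fin d)) g g' ↔
          ((∀ a b : Fin d, Reach g a b ↔ Reach g' a b) ∧
            ∀ a : Fin d, blockCount g g a = blockCount g' g a))) :=
  symmetricGroup_braid_orbits_general d g hswap hprod
end
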